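/- For every nonnegative integer n, the Zagier polynomial evaluated at -3/2 vanishes in odd degree: B*_{2n+1}(-3/2) = 0. -/

import Mathlib

/-!
Put `H_m = ∑_r C(m+r, 2r)/(m+r) X^r`. Since `B_r(x+1) - B_r(x) = r x^(r-1)`, we get
`B*_m(x+1) - B*_m(x) = H_m'(x)` and `∫_x^{x+1} B*_m = H_m(x)`. The polynomial
`2 H_m' = ∑_k C(m+k, 2k+1) X^k` is a shifted Chebyshev polynomial; its three-term recurrence
makes it invariant under `x ↦ -4 - x` when `m` is odd. Then `B*_m(x) + B*_m(-3 - x)` is a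
1-periodic polynomial, hence a constant, and integrating over `[-2, -1]` identifies this constant
as `2 H_m(-2)`. That vanishes because `2m H_m(x)` is the Vieta–Lucas polynomial `C_m(x + 2)`,
which is odd for odd `m`. So `B*_m(-3 - x) = -B*_m(x)`, and `x = -3/2` gives the theorem.
-/

open Finset Polynomial

/-- The Zagier polynomials, evaluated at a real number. -/
noncomputable def zagierBstarPoly (n : ℕ) (x : ℝ) : ℝ :=
  ∑ r ∈ Finset.range (n + 1),
    ((n + r).choose (2 * r) : ℝ) * (Polynomial.aeval x (Polynomial.bernoulli r)) / (n + r)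

theorem Polynomial.coeff_sum_range_C_mul_X_pow {R : Type*} [Semiring R] {n : ℕ} {f : ℕ → R}
    (hf : ∀ k, n ≤ k → f k = 0) (j : ℕ) :
    (∑ k ∈ range n, C (f k) * X ^ k).coeff j = f j := by
  simp only [finsetSum_coeff, coeff_C_mul_X_pow, sum_ite_eq, mem_range]
  split_ifs with h
  · rfl
  · exact (hf j (not_lt.1 h)).symm

theorem Polynomial.eval_eq_eval_zero_of_periodic {R : Type*} [CommRing R] [IsDomain R]
    [CharZero R] {p : R[X]} {c : R} (hc : c ≠ 0) (hp : Function.Periodic p.eval c) (x : R) :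
    p.eval x = p.eval 0 := by
  have hconst : p = C (p.eval 0) := by
    refine p.eq_of_infinite_eval_eq _ (Set.infinite_of_injective_forall_mem
      (f := fun n : ℕ => (n * c : R)) ?_ fun n => ?_)
    · exact fun a b h => Nat.cast_injective (mul_right_cancel₀ hc h)
    · simpa using hp.nat_mul_eq n
  rw [hconst, eval_C, eval_C]

theorem bernoulliFun_add_one (r : ℕ) (x : ℝ) :
    bernoulliFun r (x + 1) = bernoulliFun r x + r * x ^ (r - 1) := by
  simpa [bernoulliFun, aeval_comp, add_comm] using
    congr_arg (·.aeval x) (bernoulli_comp_one_add_X r)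

theorem integral_bernoulliFun_add_one (r : ℕ) (x : ℝ) :
    ∫ t in x..x + 1, bernoulliFun r t = x ^ r := by
  rw [intervalIntegral.integral_eq_sub_of_hasDerivAt (fun t _ => antideriv_bernoulliFun r t)
    (intervalIntegrable_bernoulliFun r _ _), bernoulliFun_add_one, Nat.add_sub_cancel]
  push_cast
  field_simp
  ring

/-- This is `S_{m-1}(X + 2)` for the Chebyshev polynomials `Polynomial.Chebyshev.S`. -/
noncomputable def chebyshevSum (m : ℕ) : ℝ[X] :=
  ∑ k ∈ range m, C ((m + k).choose (2 * k + 1) : ℝ) * X ^ k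

theorem coeff_chebyshevSum (m k : ℕ) :
    (chebyshevSum m).coeff k = (m + k).choose (2 * k + 1) :=
  coeff_sum_range_C_mul_X_pow (fun j hj => by
    simp [Nat.choose_eq_zero_of_lt (by omega : m + j < 2 * j + 1)]) k

theorem chebyshevSum_add_two (m : ℕ) :
    chebyshevSum (m + 2) = (2 + X) * chebyshevSum (m + 1) - chebyshevSum m := by
  ext (_ | k)
  · simp [add_mul, coeff_chebyshevSum]
    ring
  · have h₁ : (m + k + 3).choose (2 * k + 3) =
        (m + k + 2).choose (2 * k + 2) + (m + k + 2).choose (2 * k + 3) :=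
      Nat.choose_succ_succ' _ _
    have h₂ : (m + k + 2).choose (2 * k + 2) =
        (m + k + 1).choose (2 * k + 1) + (m + k + 1).choose (2 * k + 2) :=
      Nat.choose_succ_succ' _ _
    have h₃ : (m + k + 2).choose (2 * k + 3) =
        (m + k + 1).choose (2 * k + 2) + (m + k + 1).choose (2 * k + 3) :=
      Nat.choose_succ_succ' _ _
    have pascal : (m + k + 3).choose (2 * k + 3) + (m + k + 1).choose (2 * k + 3) =
        2 * (m + k + 2).choose (2 * k + 3) + (m + k + 1).choose (2 * k + 1) := by omega
    simp only [add_mul, coeff_sub, coeff_add, coeff_X_mul, coeff_ofNat_mul, coeff_chebyshevSum]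
    rw [eq_sub_iff_add_eq]
    ring_nf at pascal ⊢
    exact_mod_cast pascal

theorem eval_chebyshevSum_neg_four_sub (m : ℕ) (x : ℝ) :
    (chebyshevSum m).eval (-4 - x) = (-1) ^ (m + 1) * (chebyshevSum m).eval x := by
  induction m using Nat.twoStepInduction with
  | zero => simp [chebyshevSum]
  | one => simp [chebyshevSum]
  | more m ih₀ ih₁ =>
    simp only [chebyshevSum_add_two, eval_sub, eval_mul, eval_add, eval_ofNat, eval_X, ih₀, ih₁]
    ring

theorem eval_chebyshevSum_neg_two_of_even {m : ℕ} (hm : Even m) :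
    (chebyshevSum m).eval (-2) = 0 := by
  have h := eval_chebyshevSum_neg_four_sub m (-2)
  rw [hm.add_one.neg_one_pow] at h
  norm_num at h
  linarith

noncomputable def zagierCoeff (m r : ℕ) : ℝ := (m + r).choose (2 * r) / (m + r)

noncomputable def zagierMean (m : ℕ) : ℝ[X] :=
  ∑ r ∈ range (m + 1), C (zagierCoeff m r) * X ^ r

theorem coeff_zagierMean (m r : ℕ) : (zagierMean m).coeff r = zagierCoeff m r :=
  coeff_sum_range_C_mul_X_pow (fun k hk => by
    simp [zagierCoeff, Nat.choose_eq_zero_of_lt (by omega : m + k < 2 * k)]) r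

theorem two_mul_succ_mul_zagierCoeff_succ (m k : ℕ) :
    2 * (k + 1) * zagierCoeff m (k + 1) = (m + k).choose (2 * k + 1) := by
  have h : ((m + k + 1 : ℕ) : ℝ) * (m + k).choose (2 * k + 1) =
      (m + k + 1).choose (2 * k + 2) * (2 * k + 2 : ℕ) := by
    exact_mod_cast Nat.add_one_mul_choose_eq (m + k) (2 * k + 1)
  rw [zagierCoeff, show m + (k + 1) = m + k + 1 by ring, show 2 * (k + 1) = 2 * k + 2 by ring]
  push_cast at h ⊢
  field_simp
  linarith

theorem two_mul_derivative_zagierMean (m : ℕ) :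
    2 * derivative (zagierMean m) = chebyshevSum m := by
  ext k
  rw [coeff_ofNat_mul, coeff_derivative, coeff_zagierMean, coeff_chebyshevSum,
    ← two_mul_succ_mul_zagierCoeff_succ]
  ring

/-- The right side is the Vieta–Lucas polynomial `C_m(X + 2)`, see
`Polynomial.Chebyshev.C_eq_S_sub_X_mul_S`. -/
theorem two_mul_mul_zagierMean {m : ℕ} (hm : m ≠ 0) :
    2 * (m : ℝ[X]) * zagierMean m = 2 * chebyshevSum (m + 1) - (2 + X) * chebyshevSum m := by
  ext (_ | k)
  · simp [add_mul, coeff_chebyshevSum, coeff_zagierMean, zagierCoeff]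
    field_simp
    ring
  · have pascal : ((m + k + 2).choose (2 * k + 3) : ℝ) =
        (m + k + 1).choose (2 * k + 2) + (m + k + 1).choose (2 * k + 3) := by
      exact_mod_cast Nat.choose_succ_succ' (m + k + 1) (2 * k + 2)
    have hcoeff : ((m : ℝ) + k + 1) * zagierCoeff m (k + 1) =
        (m + k + 1).choose (2 * k + 2) := by
      rw [zagierCoeff, show 2 * (k + 1) = 2 * k + 2 by ring]
      push_cast
      field_simp
      ring_nf
    simp only [mul_assoc, add_mul, coeff_ofNat_mul, coeff_natCast_mul, coeff_sub, coeff_add,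
      coeff_X_mul, coeff_chebyshevSum, coeff_zagierMean]
    rw [← two_mul_succ_mul_zagierCoeff_succ m k, show m + 1 + (k + 1) = m + k + 2 by ring,
      show m + (k + 1) = m + k + 1 by ring, show 2 * (k + 1) + 1 = 2 * k + 3 by ring, pascal]
    linear_combination 2 * hcoeff

theorem eval_zagierMean_neg_two_of_odd {m : ℕ} (hm : Odd m) : (zagierMean m).eval (-2) = 0 := by
  have h := congrArg (eval (-2)) (two_mul_mul_zagierMean hm.pos.ne')
  simp only [eval_mul, eval_sub, eval_add, eval_ofNat, eval_natCast, eval_X,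
    eval_chebyshevSum_neg_two_of_even hm.add_one] at h
  have hm₀ : (m : ℝ) ≠ 0 := Nat.cast_ne_zero.2 hm.pos.ne'
  simpa [hm₀] using h

theorem zagierBstarPoly_eq_sum (m : ℕ) (x : ℝ) :
    zagierBstarPoly m x = ∑ r ∈ range (m + 1), zagierCoeff m r * bernoulliFun r x := by
  refine sum_congr rfl fun r _ => ?_
  rw [zagierCoeff, bernoulliFun, eval_map_algebraMap]
  ring

noncomputable def zagierBstar (m : ℕ) : ℝ[X] :=
  ∑ r ∈ range (m + 1), C (zagierCoeff m r) * (Polynomial.bernoulli r).map (algebraMap ℚ ℝ)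

theorem eval_zagierBstar (m : ℕ) (x : ℝ) : (zagierBstar m).eval x = zagierBstarPoly m x := by
  simp [zagierBstar, eval_finsetSum, zagierBstarPoly_eq_sum, bernoulliFun]

theorem continuous_zagierBstarPoly (m : ℕ) : Continuous (zagierBstarPoly m) := by
  simpa only [eval_zagierBstar] using (zagierBstar m).continuous

theorem zagierBstarPoly_add_one_sub (m : ℕ) (x : ℝ) :
    zagierBstarPoly m (x + 1) - zagierBstarPoly m x = (derivative (zagierMean m)).eval x := by
  simp only [zagierBstarPoly_eq_sum, ← sum_sub_distrib, zagierMean, derivative_sum,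
    derivative_C_mul_X_pow, eval_finsetSum, eval_mul, eval_C, eval_pow, eval_X,
    bernoulliFun_add_one]
  refine sum_congr rfl fun r _ => ?_
  ring

theorem integral_zagierBstarPoly_add_one (m : ℕ) (x : ℝ) :
    ∫ t in x..x + 1, zagierBstarPoly m t = (zagierMean m).eval x := by
  simp only [zagierBstarPoly_eq_sum, zagierMean, eval_finsetSum, eval_mul, eval_C, eval_pow,
    eval_X]
  rw [intervalIntegral.integral_finsetSum fun r _ =>
    (intervalIntegrable_bernoulliFun r _ _).const_mul _]
  simp only [intervalIntegral.integral_const_mul, integral_bernoulliFun_add_one]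

theorem zagierBstarPoly_add_neg_three_sub_periodic {m : ℕ} (hm : Odd m) :
    Function.Periodic (fun x => zagierBstarPoly m x + zagierBstarPoly m (-3 - x)) 1 := by
  have hsymm (y : ℝ) : (derivative (zagierMean m)).eval (-4 - y) =
      (derivative (zagierMean m)).eval y := by
    have h := eval_chebyshevSum_neg_four_sub m y
    rw [hm.add_one.neg_one_pow, one_mul, ← two_mul_derivative_zagierMean] at h
    simpa using h
  intro y
  have h₁ := zagierBstarPoly_add_one_sub m y
  have h₂ := zagierBstarPoly_add_one_sub m (-4 - y)
  rw [hsymm, show -4 - y + 1 = -3 - y by ring] at h₂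
  simp only [show -3 - (y + 1) = -4 - y by ring]
  linarith

theorem integral_zagierBstarPoly_add_neg_three_sub (m : ℕ) :
    ∫ t in (-2 : ℝ)..(-1), (zagierBstarPoly m t + zagierBstarPoly m (-3 - t)) =
      2 * (zagierMean m).eval (-2) := by
  have hcont := continuous_zagierBstarPoly m
  have hcont' : Continuous fun t => zagierBstarPoly m (-3 - t) := by fun_prop
  rw [intervalIntegral.integral_add (hcont.intervalIntegrable _ _) (hcont'.intervalIntegrable _ _),
    intervalIntegral.integral_comp_sub_left (zagierBstarPoly m)]
  have h := integral_zagierBstarPoly_add_one m (-2)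
  norm_num at h ⊢
  rw [h, two_mul]

theorem zagierBstarPoly_neg_three_sub_of_odd {m : ℕ} (hm : Odd m) (x : ℝ) :
    zagierBstarPoly m (-3 - x) = -zagierBstarPoly m x := by
  set Q : ℝ[X] := zagierBstar m + (zagierBstar m).comp (-3 - X)
  have hQ (y : ℝ) : Q.eval y = zagierBstarPoly m y + zagierBstarPoly m (-3 - y) := by
    simp [Q, eval_zagierBstar]
  have hconst (y : ℝ) : Q.eval y = Q.eval 0 :=
    eval_eq_eval_zero_of_periodic one_ne_zero
      (by simpa only [hQ] using zagierBstarPoly_add_neg_three_sub_periodic hm) y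
  have hzero : Q.eval 0 = 0 := by
    have h := integral_zagierBstarPoly_add_neg_three_sub m
    simp only [← hQ, hconst, intervalIntegral.integral_const,
      eval_zagierMean_neg_two_of_odd hm] at h
    norm_num at h
    exact h
  linarith [hQ x, hconst x]

theorem zagierBstarPoly_odd_at_neg_three_halves (n : ℕ) :
    zagierBstarPoly (2 * n + 1) (-3 / 2) = 0 := by
  have h := zagierBstarPoly_neg_three_sub_of_odd (odd_two_mul_add_one n) (-3 / 2)
  norm_num at h
  linarith
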